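/- Let d be an (⊙,∨)-derivation on the standard MV-algebra I = [0,1]. Then the following are equivalent: (1) d is isotone and d(1) ∈ {0,1}; (2) d(x ⊕ y) = d(x) ⊕ d(y) for all x, y ∈ I; (3) d(x ⊙ y) = d(x) ⊙ d(y) for all x, y ∈ I. -/
import Mathlib

/-- Łukasiewicz strong conjunction `x ⊙ y = max 0 (x + y - 1)` on the unit interval. -/
noncomputable def od (x y : unitInterval) : unitInterval :=
  ⟨max 0 (x.1 + y.1 - 1),
    ⟨le_max_left _ _, max_le zero_le_one (by have := x.2.2; have := y.2.2; linarith)⟩⟩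

/-- Łukasiewicz strong disjunction `x ⊕ y = min 1 (x + y)` on the unit interval. -/
noncomputable def op (x y : unitInterval) : unitInterval :=
  ⟨min 1 (x.1 + y.1),
    ⟨le_min zero_le_one (by have := x.2.1; have := y.2.1; linarith), min_le_left _ _⟩⟩

/-- `d` is an `(⊙,∨)`-derivation on the standard MV-algebra `[0,1]`:
`d (x ⊙ y) = (d x ⊙ y) ∨ (x ⊙ d y)` for all `x, y`. -/
def IsOdotDer (d : unitInterval → unitInterval) : Prop :=
  ∀ x y : unitInterval, d (od x y) = max (od (d x) y) (od x (d y))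

namespace Stmt13Aux

lemma od_coe (x y : unitInterval) : (od x y : ℝ) = max 0 (x.1 + y.1 - 1) := rfl

lemma od_one (x : unitInterval) : od x 1 = x := by
  apply Subtype.ext
  rw [od_coe]
  simp only [Set.Icc.coe_one]
  rw [show (x:ℝ) + 1 - 1 = x by ring]
  exact max_eq_right x.2.1

lemma od_zero_right (x : unitInterval) : od x 0 = 0 := by
  apply Subtype.ext
  rw [od_coe]
  simp only [Set.Icc.coe_zero]
  exact max_eq_left (by have := x.2.2; linarith)

lemma od_zero_left (x : unitInterval) : od 0 x = 0 := by
  apply Subtype.ext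
  rw [od_coe]
  simp only [Set.Icc.coe_zero]
  exact max_eq_left (by have := x.2.2; linarith)

lemma d_zero {d : unitInterval → unitInterval} (hd : IsOdotDer d) : d 0 = 0 := by
  have h := hd 0 0
  rw [od_zero_right, od_zero_right, od_zero_left] at h
  simpa using h

lemma d_le {d : unitInterval → unitInterval} (hd : IsOdotDer d) (x : unitInterval) :
    (d x : ℝ) ≤ (x : ℝ) := by
  have h := hd x (unitInterval.symm x)
  have h0 : od x (unitInterval.symm x) = 0 := by
    apply Subtype.ext
    rw [od_coe, unitInterval.coe_symm_eq]
    simp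
  rw [h0, d_zero hd] at h
  -- 0 = max (od (d x) (symm x)) (od x (d (symm x)))
  have h1 : od (d x) (unitInterval.symm x) ≤ 0 := h ▸ le_max_left _ _
  have h2 : (od (d x) (unitInterval.symm x) : ℝ) ≤ 0 := Subtype.coe_le_coe.2 h1
  rw [od_coe, unitInterval.coe_symm_eq] at h2
  have := le_max_right (0:ℝ) ((d x : ℝ) + (1 - (x:ℝ)) - 1)
  linarith [le_trans this h2]

lemma d_ge {d : unitInterval → unitInterval} (hd : IsOdotDer d) (x : unitInterval) :
    od x (d 1) ≤ d x := by
  have h := hd x 1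
  rw [od_one, od_one] at h
  calc od x (d 1) ≤ max (d x) (od x (d 1)) := le_max_right _ _
    _ = d x := h.symm

/-- If `d 1 = 1` then `d = id`. -/
lemma d_id {d : unitInterval → unitInterval} (hd : IsOdotDer d) (h1 : d 1 = 1)
    (x : unitInterval) : d x = x := by
  have hge := d_ge hd x
  rw [h1, od_one] at hge
  exact le_antisymm (Subtype.coe_le_coe.1 (d_le hd x)) hge

lemma class1 {d : unitInterval → unitInterval} (hd : IsOdotDer d)
    (h : (∀ x y : unitInterval, x ≤ y → d x ≤ d y) ∧ (d 1 = 0 ∨ d 1 = 1)) :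
    (∀ x, d x = 0) ∨ (∀ x, d x = x) := by
  rcases h.2 with h1 | h1
  · left
    intro x
    have hx1 : x ≤ (1 : unitInterval) := unitInterval.le_one'
    have := h.1 x 1 hx1
    rw [h1] at this
    exact le_antisymm this unitInterval.nonneg'
  · exact Or.inr (d_id hd h1)

lemma class2 {d : unitInterval → unitInterval} (hd : IsOdotDer d)
    (h : ∀ x y : unitInterval, d (op x y) = op (d x) (d y)) :
    (∀ x, d x = 0) ∨ (∀ x, d x = x) := by
  have h11 : op (1 : unitInterval) 1 = 1 := by
    apply Subtype.ext
    show min 1 (1 + 1) = (1:ℝ)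
    norm_num
  have hone := h 1 1
  rw [h11] at hone
  have hone' : (d 1 : ℝ) = min 1 ((d 1 : ℝ) + (d 1 : ℝ)) := congrArg Subtype.val hone
  have hd1 : d 1 = 0 ∨ d 1 = 1 := by
    rcases le_total (1:ℝ) ((d 1 : ℝ) + (d 1 : ℝ)) with hle | hle
    · right
      apply Subtype.ext
      rw [hone', min_eq_left hle]; rfl
    · left
      apply Subtype.ext
      rw [min_eq_right hle] at hone'
      have : (d 1 : ℝ) = 0 := by linarith
      rw [this]; rfl
  -- isotone from (2)
  have hiso : ∀ x y : unitInterval, x ≤ y → d x ≤ d y := by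
    intro x y hxy
    have hz : (y:ℝ) - (x:ℝ) ∈ Set.Icc (0:ℝ) 1 :=
      ⟨by have := Subtype.coe_le_coe.2 hxy; linarith,
       by have := y.2.2; have := x.2.1; linarith⟩
    set z : unitInterval := ⟨(y:ℝ) - (x:ℝ), hz⟩
    have hopxz : op x z = y := by
      apply Subtype.ext
      show min 1 ((x:ℝ) + ((y:ℝ) - (x:ℝ))) = (y:ℝ)
      rw [show (x:ℝ) + ((y:ℝ) - (x:ℝ)) = (y:ℝ) by ring]
      exact min_eq_right y.2.2
    have := h x z
    rw [hopxz] at this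
    rw [this]
    apply Subtype.coe_le_coe.1
    show (d x : ℝ) ≤ min 1 ((d x : ℝ) + (d z : ℝ))
    exact le_min (d x).2.2 (by have := (d z).2.1; linarith)
  exact class1 hd ⟨hiso, hd1⟩

lemma class3 {d : unitInterval → unitInterval} (hd : IsOdotDer d)
    (h : ∀ x y : unitInterval, d (od x y) = od (d x) (d y)) :
    (∀ x, d x = 0) ∨ (∀ x, d x = x) := by
  have h11 : od (1 : unitInterval) 1 = 1 := od_one 1
  have hone := h 1 1
  rw [h11] at hone
  have hone' : (d 1 : ℝ) = max 0 ((d 1 : ℝ) + (d 1 : ℝ) - 1) := congrArg Subtype.val hone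
  have hd1 : d 1 = 0 ∨ d 1 = 1 := by
    rcases le_total ((d 1 : ℝ) + (d 1 : ℝ) - 1) 0 with hle | hle
    · left
      apply Subtype.ext
      rw [hone', max_eq_left hle]; rfl
    · right
      apply Subtype.ext
      rw [max_eq_right hle] at hone'
      have : (d 1 : ℝ) = 1 := by linarith
      rw [this]; rfl
  rcases hd1 with h1 | h1
  · left
    intro x
    have := h x 1
    rw [od_one, h1, od_zero_right] at this
    exact this
  · exact Or.inr (d_id hd h1)

end Stmt13Aux

open Stmt13Aux in
/-- for an (⊙,∨)-derivation d, the following are equivalent: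
(1) d is isotone and d 1 ∈ {0,1}; (2) d (x ⊕ y) = d x ⊕ d y for all x, y;
(3) d (x ⊙ y) = d x ⊙ d y for all x, y. -/
theorem stmt13 (d : unitInterval → unitInterval) (hd : IsOdotDer d) :
    List.TFAE
      [(∀ x y : unitInterval, x ≤ y → d x ≤ d y) ∧ (d 1 = 0 ∨ d 1 = 1),
       ∀ x y : unitInterval, d (op x y) = op (d x) (d y),
       ∀ x y : unitInterval, d (od x y) = od (d x) (d y)] := by
  have op00 : op (0 : unitInterval) 0 = 0 := by
    apply Subtype.ext
    show min 1 (0 + 0) = (0:ℝ)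
    norm_num
  have od00 : od (0 : unitInterval) 0 = 0 := od_zero_left 0
  tfae_have 1 → 2 := by
    intro h
    rcases class1 hd h with h0 | hid
    · intro x y; rw [h0, h0, h0, op00]
    · intro x y; rw [hid, hid, hid]
  tfae_have 2 → 3 := by
    intro h
    rcases class2 hd h with h0 | hid
    · intro x y; rw [h0, h0, h0, od00]
    · intro x y; rw [hid, hid, hid]
  tfae_have 3 → 1 := by
    intro h
    rcases class3 hd h with h0 | hid
    · refine ⟨fun x y _ => by rw [h0, h0], Or.inl (h0 1)⟩
    · refine ⟨fun x y hxy => by rw [hid, hid]; exact hxy, Or.inr (hid 1)⟩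
  tfae_finish
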